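/- Let A, B, C, D, τ, ω be real with ω > 0, B²ω² + D² ≠ 0, and suppose λ = iω is a simple root of Δ(λ) = λ² + (A+Be^{-λτ})λ + (C+De^{-λτ}). If additionally ω satisfies ω⁴ = (B²-A²+2C)ω² + (D²-C²) and A²ω² + (C-ω²)² = B²ω² + D², then Re[(dλ/dτ)⁻¹] = (D² - C² + ω⁴)/(ω²(B²ω² + D²)). -/

import Mathlib

/-!
Write `c = cos ωτ`, `s = sin ωτ`. The real and imaginary parts of `Δ(iω) = 0` read
`Bωs + Dc = ω² - C` and `Ds - Bωc = Aω`. Taking the real part of the quotient by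
`iω(Biω + D)` via multiplication with its conjugate, the `τ`-terms cancel and the numerator is
`Aω(Ds - Bωc) + 2ω²(Bωs + Dc) - B²ω² = (A² - B² - 2C)ω² + 2ω⁴`,
which the frequency equation turns into `D² - C² + ω⁴`.
-/

open Complex

lemma exp_I_mul_ofReal_mul_ofReal (ω τ : ℝ) :
    exp (I * ω * τ) = Real.cos (ω * τ) + Real.sin (ω * τ) * I := by
  rw [show I * ω * τ = ((ω * τ : ℝ) : ℂ) * I by push_cast; ring, exp_mul_I, ofReal_cos,
    ofReal_sin]

lemma exp_neg_I_mul_ofReal_mul_ofReal (ω τ : ℝ) :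
    exp (-(I * ω) * τ) = Real.cos (ω * τ) - Real.sin (ω * τ) * I := by
  rw [show -(I * ω) * τ = I * ((-ω : ℝ) : ℂ) * τ by push_cast; ring,
    exp_I_mul_ofReal_mul_ofReal, neg_mul, Real.cos_neg, Real.sin_neg]
  push_cast; ring

lemma characteristic_re_at_I_mul (A B C D τ ω : ℝ) :
    ((I * ω) ^ 2 + ((A : ℂ) + B * exp (-(I * ω) * τ)) * (I * ω)
        + ((C : ℂ) + D * exp (-(I * ω) * τ))).re
      = C - ω ^ 2 + B * ω * Real.sin (ω * τ) + D * Real.cos (ω * τ) := by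
  rw [exp_neg_I_mul_ofReal_mul_ofReal]
  simp only [pow_two, add_re, add_im, sub_re, sub_im, mul_re, mul_im, I_re, I_im, ofReal_re,
    ofReal_im]
  ring

lemma characteristic_im_at_I_mul (A B C D τ ω : ℝ) :
    ((I * ω) ^ 2 + ((A : ℂ) + B * exp (-(I * ω) * τ)) * (I * ω)
        + ((C : ℂ) + D * exp (-(I * ω) * τ))).im
      = ω * (A + B * Real.cos (ω * τ)) - D * Real.sin (ω * τ) := by
  rw [exp_neg_I_mul_ofReal_mul_ofReal]
  simp only [pow_two, add_re, add_im, sub_re, sub_im, mul_re, mul_im, I_re, I_im, ofReal_re,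
    ofReal_im]
  ring

lemma re_inv_deriv_at_I_mul (A B D τ ω : ℝ) :
    ((((A : ℂ) + 2 * (I * ω)) * exp ((I * ω) * τ)) / ((I * ω) * ((B : ℂ) * (I * ω) + D))
        - ((B : ℂ) * (I * ω) * τ - B + D * τ) / ((I * ω) * ((B : ℂ) * (I * ω) + D))).re
      = (A * ω * (D * Real.sin (ω * τ) - B * ω * Real.cos (ω * τ))
          + 2 * ω ^ 2 * (B * ω * Real.sin (ω * τ) + D * Real.cos (ω * τ)) - B ^ 2 * ω ^ 2)
        / (ω ^ 2 * (B ^ 2 * ω ^ 2 + D ^ 2)) := by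
  rw [div_sub_div_same, div_re, ← add_div, exp_I_mul_ofReal_mul_ofReal, normSq_apply]
  congr 1 <;>
    simp only [add_re, add_im, sub_re, sub_im, mul_re, mul_im, I_re, I_im, ofReal_re, ofReal_im,
      re_ofNat, im_ofNat] <;>
    ring

theorem stmt9_general (A B C D τ ω : ℝ)
    (hroot : (Complex.I * ω) ^ 2
        + ((A : ℂ) + (B : ℂ) * Complex.exp (-(Complex.I * ω) * τ)) * (Complex.I * ω)
        + ((C : ℂ) + (D : ℂ) * Complex.exp (-(Complex.I * ω) * τ)) = 0)
    (hfreq : ω ^ 4 = (B ^ 2 - A ^ 2 + 2 * C) * ω ^ 2 + (D ^ 2 - C ^ 2)) :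
    ((((A : ℂ) + 2 * (Complex.I * ω)) * Complex.exp ((Complex.I * ω) * τ))
          / ((Complex.I * ω) * ((B : ℂ) * (Complex.I * ω) + (D : ℂ)))
        - ((B : ℂ) * (Complex.I * ω) * τ - (B : ℂ) + (D : ℂ) * τ)
          / ((Complex.I * ω) * ((B : ℂ) * (Complex.I * ω) + (D : ℂ)))).re
      = (D ^ 2 - C ^ 2 + ω ^ 4) / (ω ^ 2 * (B ^ 2 * ω ^ 2 + D ^ 2)) := by
  have hre : C - ω ^ 2 + B * ω * Real.sin (ω * τ) + D * Real.cos (ω * τ) = 0 := by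
    rw [← characteristic_re_at_I_mul, hroot, zero_re]
  have him : ω * (A + B * Real.cos (ω * τ)) - D * Real.sin (ω * τ) = 0 := by
    rw [← characteristic_im_at_I_mul, hroot, zero_im]
  rw [re_inv_deriv_at_I_mul]
  congr 1
  linear_combination (-A * ω) * him + 2 * ω ^ 2 * hre + hfreq

theorem stmt9 (A B C D τ ω : ℝ) (hω : 0 < ω)
    (hBD : B ^ 2 * ω ^ 2 + D ^ 2 ≠ 0)
    (hroot : (Complex.I * ω) ^ 2
        + ((A : ℂ) + (B : ℂ) * Complex.exp (-(Complex.I * ω) * τ)) * (Complex.I * ω)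
        + ((C : ℂ) + (D : ℂ) * Complex.exp (-(Complex.I * ω) * τ)) = 0)
    (hsimple : 2 * (Complex.I * ω) + ((A : ℂ) + (B : ℂ) * Complex.exp (-(Complex.I * ω) * τ))
        - (τ : ℂ) * Complex.exp (-(Complex.I * ω) * τ)
            * ((B : ℂ) * (Complex.I * ω) + (D : ℂ)) ≠ 0)
    (hfreq : ω ^ 4 = (B ^ 2 - A ^ 2 + 2 * C) * ω ^ 2 + (D ^ 2 - C ^ 2))
    (hmod : A ^ 2 * ω ^ 2 + (C - ω ^ 2) ^ 2 = B ^ 2 * ω ^ 2 + D ^ 2) :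
    ((((A : ℂ) + 2 * (Complex.I * ω)) * Complex.exp ((Complex.I * ω) * τ))
          / ((Complex.I * ω) * ((B : ℂ) * (Complex.I * ω) + (D : ℂ)))
        - ((B : ℂ) * (Complex.I * ω) * τ - (B : ℂ) + (D : ℂ) * τ)
          / ((Complex.I * ω) * ((B : ℂ) * (Complex.I * ω) + (D : ℂ)))).re
      = (D ^ 2 - C ^ 2 + ω ^ 4) / (ω ^ 2 * (B ^ 2 * ω ^ 2 + D ^ 2)) :=
  stmt9_general A B C D τ ω hroot hfreq
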